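/- The composite map sending an n×n magog matrix (a_{i,j}) to the matrix (h_{i,j})_{0≤i,j≤n} with h_{i,j} = i + j − 2·Σ_{i'≤i, j'≤j} a_{i',j'} is a bijection from n×n magog matrices to magog height-function matrices of order n. -/

import Mathlib

open Finset

/-- Partial row sum: sum of entries `a i j'` over (0-indexed) columns `j' < j`,
i.e. the 1-indexed partial row sum through column `j`. -/
def rowPS {n : ℕ} (a : Matrix (Fin n) (Fin n) ℤ) (i : Fin n) (j : ℕ) : ℤ :=
  ∑ j' ∈ Finset.univ.filter (fun j' : Fin n => (j' : ℕ) < j), a i j'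

/-- Partial column sum: sum of entries `a i' j` over (0-indexed) rows `i' < i`,
i.e. the 1-indexed partial column sum through row `i`. -/
def colPS {n : ℕ} (a : Matrix (Fin n) (Fin n) ℤ) (i : ℕ) (j : Fin n) : ℤ :=
  ∑ i' ∈ Finset.univ.filter (fun i' : Fin n => (i' : ℕ) < i), a i' j

/-- An `n × n` square sign matrix. -/
def IsSquareSign (n : ℕ) (a : Matrix (Fin n) (Fin n) ℤ) : Prop :=
  (∀ i j, a i j = 0 ∨ a i j = 1 ∨ a i j = -1) ∧
  (∀ i, ∑ j, a i j = 1) ∧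
  (∀ j, ∑ i, a i j = 1) ∧
  (∀ (i : ℕ) (j : Fin n), colPS a i j = 0 ∨ colPS a i j = 1) ∧
  (∀ (i : Fin n) (j : ℕ), 0 ≤ rowPS a i j)

/-- A magog matrix: a square sign matrix satisfying the special inequalities.
Here `i j : ℕ` are 0-indexed, so `i + 2 < n` corresponds to the 1-indexed
range `1 ≤ i ≤ n - 2`; the 1-indexed row `i+1` is the `Fin n` index `i`, etc. -/
def IsMagog (n : ℕ) (a : Matrix (Fin n) (Fin n) ℤ) : Prop :=
  IsSquareSign n a ∧
  ∀ (i j : ℕ) (hi : i + 2 < n) (hj : j + 2 < n),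
    0 ≤ rowPS a ⟨i + 1, by omega⟩ (j + 1) + colPS a (i + 2) ⟨j + 1, by omega⟩
        - colPS a (i + 1) ⟨j, by omega⟩
/-- A magog corner-sum matrix of order `n`, indexed by `0 ≤ i, j ≤ n`. -/
def IsMagogCSM (n : ℕ) (c : Fin (n + 1) → Fin (n + 1) → ℤ) : Prop :=
  (∀ k : Fin (n + 1), c 0 k = 0 ∧ c k 0 = 0) ∧
  (∀ k : Fin (n + 1), c (Fin.last n) k = (k : ℕ) ∧ c k (Fin.last n) = (k : ℕ)) ∧
  (∀ (i : Fin (n + 1)) (j : ℕ) (hj : j < n),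
      c i ⟨j + 1, by omega⟩ - c i ⟨j, by omega⟩ = 0 ∨
      c i ⟨j + 1, by omega⟩ - c i ⟨j, by omega⟩ = 1) ∧
  (∀ (i : ℕ) (hi : i < n) (j : Fin (n + 1)),
      c ⟨i, by omega⟩ j ≤ c ⟨i + 1, by omega⟩ j) ∧
  (∀ (i j : ℕ) (hi : i + 2 ≤ n) (hj : j + 2 ≤ n),
      2 * c ⟨i + 1, by omega⟩ ⟨j + 1, by omega⟩ ≤
        c ⟨i + 2, by omega⟩ ⟨j + 2, by omega⟩ + c ⟨i + 1, by omega⟩ ⟨j, by omega⟩)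

/-- The corner-sum map: `cornerOf a i j = ∑_{i' ≤ i, j' ≤ j} a_{i',j'}` (1-indexed). -/
def cornerOf {n : ℕ} (a : Matrix (Fin n) (Fin n) ℤ) : Fin (n + 1) → Fin (n + 1) → ℤ :=
  fun i j => ∑ i' ∈ Finset.univ.filter (fun i' : Fin n => (i' : ℕ) < (i : ℕ)),
      ∑ j' ∈ Finset.univ.filter (fun j' : Fin n => (j' : ℕ) < (j : ℕ)), a i' j'
/-- A magog height-function matrix of order `n`, indexed by `0 ≤ i, j ≤ n`. -/
def IsMagogHFM (n : ℕ) (h : Fin (n + 1) → Fin (n + 1) → ℤ) : Prop :=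
  (∀ k : Fin (n + 1), h 0 k = (k : ℕ) ∧ h k 0 = (k : ℕ)) ∧
  (∀ k : Fin (n + 1), h (Fin.last n) k = (n : ℤ) - (k : ℕ) ∧
      h k (Fin.last n) = (n : ℤ) - (k : ℕ)) ∧
  (∀ (i : Fin (n + 1)) (j : ℕ) (hj : j < n),
      h i ⟨j + 1, by omega⟩ - h i ⟨j, by omega⟩ = 1 ∨
      h i ⟨j + 1, by omega⟩ - h i ⟨j, by omega⟩ = -1) ∧
  (∀ (i : ℕ) (hi : i < n) (j : Fin (n + 1)),
      ∃ k : ℕ, h ⟨i + 1, by omega⟩ j - h ⟨i, by omega⟩ j = 1 - 2 * (k : ℤ)) ∧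
  (∀ (i j : ℕ) (hi : i + 2 ≤ n) (hj : j + 2 ≤ n),
      h ⟨i + 2, by omega⟩ ⟨j + 2, by omega⟩ + h ⟨i + 1, by omega⟩ ⟨j, by omega⟩ ≤
        2 * h ⟨i + 1, by omega⟩ ⟨j + 1, by omega⟩ + 1)

/-- The height-function map `h_{i,j} = i + j - 2 c_{i,j}`. -/
def hfOf {n : ℕ} (c : Fin (n + 1) → Fin (n + 1) → ℤ) : Fin (n + 1) → Fin (n + 1) → ℤ :=
  fun i j => ((i : ℕ) : ℤ) + ((j : ℕ) : ℤ) - 2 * c i j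

/-! The map factors through the corner-sum matrix `c = cornerOf a`. Corner sums and second
differences `matOfCorner` are inverse to each other between matrices and grid functions vanishing
on the top and left edges, and every magog condition on `a` is a condition on `c`: partial column
sums are the horizontal steps of `c`, partial row sums its vertical steps, unit row and column sums
its values on the last column and row, and the special inequality is
`2 c_{i+1,j+1} ≤ c_{i+2,j+2} + c_{i+1,j}`. Magog matrices impose it only away from the last row
and column of `c`; on those it follows from the boundary values and the steps.
The height function `h = i + j - 2c` is then inverted by `c = (i + j - h) / 2`, the division being
exact since `h_{i,0} = i` and the horizontal steps `±1` force `h ≡ i + j (mod 2)`. -/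

lemma Set.bijOn_of_leftInverse_of_mem_iff {α β : Type*} {f : α → β} {g : β → α} {s : Set α}
    {t : Set β} (hgf : Function.LeftInverse g f) (hfg : Set.RightInvOn g f t)
    (hmem : ∀ x, f x ∈ t ↔ x ∈ s) : Set.BijOn f s t :=
  Set.InvOn.bijOn ⟨hgf.leftInvOn s, hfg⟩ (fun x hx => (hmem x).2 hx)
    fun y hy => (hmem (g y)).1 (by rwa [hfg hy])

section PrefixSums

variable {n : ℕ} {M : Type*} [AddCommMonoid M]

lemma sum_filter_val_lt_succ {m : ℕ} (hm : m < n) (f : Fin n → M) :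
    ∑ k ∈ univ.filter (fun k : Fin n => (k : ℕ) < m + 1), f k =
      ∑ k ∈ univ.filter (fun k : Fin n => (k : ℕ) < m), f k + f ⟨m, hm⟩ := by
  have : univ.filter (fun k : Fin n => (k : ℕ) < m + 1) =
      insert ⟨m, hm⟩ (univ.filter (fun k : Fin n => (k : ℕ) < m)) := by
    ext k
    simp only [mem_filter, mem_univ, true_and, mem_insert, Fin.ext_iff]
    omega
  rw [this, sum_insert (by simp), add_comm]

lemma filter_val_lt_eq_univ {m : ℕ} (hm : n ≤ m) :
    univ.filter (fun k : Fin n => (k : ℕ) < m) = univ :=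
  filter_true_of_mem fun k _ => k.isLt.trans_le hm

end PrefixSums

section CornerSums

variable {n : ℕ} (a : Matrix (Fin n) (Fin n) ℤ)

lemma rowPS_succ (i : Fin n) {j : ℕ} (hj : j < n) :
    rowPS a i (j + 1) = rowPS a i j + a i ⟨j, hj⟩ :=
  sum_filter_val_lt_succ hj _

lemma colPS_succ {i : ℕ} (hi : i < n) (j : Fin n) :
    colPS a (i + 1) j = colPS a i j + a ⟨i, hi⟩ j :=
  sum_filter_val_lt_succ hi _

lemma rowPS_of_le (i : Fin n) {j : ℕ} (hj : n ≤ j) : rowPS a i j = ∑ j', a i j' := by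
  rw [rowPS, filter_val_lt_eq_univ hj]

lemma colPS_of_le {i : ℕ} (hi : n ≤ i) (j : Fin n) : colPS a i j = ∑ i', a i' j := by
  rw [colPS, filter_val_lt_eq_univ hi]

lemma rowPS_min (i : Fin n) (j : ℕ) : rowPS a i (min j n) = rowPS a i j := by
  rcases le_total j n with hj | hj
  · rw [min_eq_left hj]
  · rw [min_eq_right hj, rowPS_of_le a i le_rfl, rowPS_of_le a i hj]

lemma colPS_min (i : ℕ) (j : Fin n) : colPS a (min i n) j = colPS a i j := by
  rcases le_total i n with hi | hi
  · rw [min_eq_left hi]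
  · rw [min_eq_right hi, colPS_of_le a le_rfl, colPS_of_le a hi]

@[simp]
lemma cornerOf_zero_left (j : Fin (n + 1)) : cornerOf a 0 j = 0 := by
  simp [cornerOf]

@[simp]
lemma cornerOf_zero_right (i : Fin (n + 1)) : cornerOf a i 0 = 0 := by
  simp [cornerOf]

lemma cornerOf_succ_left {i : ℕ} (hi : i < n) (j : Fin (n + 1)) :
    cornerOf a ⟨i + 1, by omega⟩ j = cornerOf a ⟨i, by omega⟩ j + rowPS a ⟨i, hi⟩ j :=
  sum_filter_val_lt_succ hi _

lemma cornerOf_succ_right (i : Fin (n + 1)) {j : ℕ} (hj : j < n) :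
    cornerOf a i ⟨j + 1, by omega⟩ = cornerOf a i ⟨j, by omega⟩ + colPS a i ⟨j, hj⟩ := by
  simp only [cornerOf, colPS, ← sum_add_distrib]
  exact sum_congr rfl fun i' _ => sum_filter_val_lt_succ hj _

lemma sum_row_eq_one_iff :
    (∀ i, ∑ j, a i j = 1) ↔ ∀ k : Fin (n + 1), cornerOf a k (Fin.last n) = (k : ℕ) := by
  have hstep (i : ℕ) (hi : i < n) : cornerOf a ⟨i + 1, by omega⟩ (Fin.last n) =
      cornerOf a ⟨i, by omega⟩ (Fin.last n) + ∑ j, a ⟨i, hi⟩ j := by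
    rw [cornerOf_succ_left a hi, rowPS_of_le a _ (Fin.val_last n).ge]
  constructor
  · intro hrow k
    obtain ⟨k, hk⟩ := k
    induction k with
    | zero => simp
    | succ k ih =>
      rw [hstep k (by omega), ih (by omega), hrow]
      push_cast
      ring
  · intro hlast i
    have := hstep i i.isLt
    rw [hlast, hlast] at this
    push_cast at this
    linarith

lemma sum_col_eq_one_iff :
    (∀ j, ∑ i, a i j = 1) ↔ ∀ k : Fin (n + 1), cornerOf a (Fin.last n) k = (k : ℕ) := by
  have hstep (j : ℕ) (hj : j < n) : cornerOf a (Fin.last n) ⟨j + 1, by omega⟩ =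
      cornerOf a (Fin.last n) ⟨j, by omega⟩ + ∑ i, a i ⟨j, hj⟩ := by
    rw [cornerOf_succ_right a _ hj, colPS_of_le a (Fin.val_last n).ge]
  constructor
  · intro hcol k
    obtain ⟨k, hk⟩ := k
    induction k with
    | zero => simp
    | succ k ih =>
      rw [hstep k (by omega), ih (by omega), hcol]
      push_cast
      ring
  · intro hlast j
    have := hstep j j.isLt
    rw [hlast, hlast] at this
    push_cast at this
    linarith

lemma colPS_mem_iff :
    (∀ (i : ℕ) (j : Fin n), colPS a i j = 0 ∨ colPS a i j = 1) ↔
      ∀ (i : Fin (n + 1)) (j : ℕ) (hj : j < n),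
        cornerOf a i ⟨j + 1, by omega⟩ - cornerOf a i ⟨j, by omega⟩ = 0 ∨
        cornerOf a i ⟨j + 1, by omega⟩ - cornerOf a i ⟨j, by omega⟩ = 1 := by
  constructor
  · intro h i j hj
    rw [cornerOf_succ_right a i hj, add_sub_cancel_left]
    exact h i ⟨j, hj⟩
  · intro h i j
    have := h ⟨min i n, by omega⟩ j j.isLt
    rwa [cornerOf_succ_right a _ j.isLt, add_sub_cancel_left, colPS_min] at this

lemma rowPS_nonneg_iff :
    (∀ (i : Fin n) (j : ℕ), 0 ≤ rowPS a i j) ↔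
      ∀ (i : ℕ) (hi : i < n) (j : Fin (n + 1)),
        cornerOf a ⟨i, by omega⟩ j ≤ cornerOf a ⟨i + 1, by omega⟩ j := by
  constructor
  · intro h i hi j
    rw [cornerOf_succ_left a hi]
    linarith [h ⟨i, hi⟩ j]
  · intro h i j
    have := h i i.isLt ⟨min j n, by omega⟩
    rw [cornerOf_succ_left a i.isLt] at this
    simpa [rowPS_min] using this

lemma entry_mem_of_colPS_mem (h : ∀ (i : ℕ) (j : Fin n), colPS a i j = 0 ∨ colPS a i j = 1)
    (i j : Fin n) : a i j = 0 ∨ a i j = 1 ∨ a i j = -1 := by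
  have hsucc := colPS_succ a i.isLt j
  rw [Fin.eta] at hsucc
  have := h i j
  have := h (i + 1) j
  omega

lemma magog_expr_eq_cornerOf {i j : ℕ} (hi : i + 2 ≤ n) (hj : j + 2 ≤ n) :
    rowPS a ⟨i + 1, by omega⟩ (j + 1) + colPS a (i + 2) ⟨j + 1, by omega⟩
        - colPS a (i + 1) ⟨j, by omega⟩ =
      cornerOf a ⟨i + 2, by omega⟩ ⟨j + 2, by omega⟩ + cornerOf a ⟨i + 1, by omega⟩ ⟨j, by omega⟩
        - 2 * cornerOf a ⟨i + 1, by omega⟩ ⟨j + 1, by omega⟩ := by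
  have e1 := cornerOf_succ_left a (i := i + 1) (by omega) ⟨j + 1, by omega⟩
  have e2 := cornerOf_succ_right a ⟨i + 2, by omega⟩ (j := j + 1) (by omega)
  have e3 := cornerOf_succ_right a ⟨i + 1, by omega⟩ (j := j) (by omega)
  linarith

end CornerSums

lemma magogCSM_ineq_of_boundary {n : ℕ} {c : Fin (n + 1) → Fin (n + 1) → ℤ}
    (hlast : ∀ k : Fin (n + 1), c (Fin.last n) k = (k : ℕ) ∧ c k (Fin.last n) = (k : ℕ))
    (hstep : ∀ (i : Fin (n + 1)) (j : ℕ) (hj : j < n),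
      c i ⟨j + 1, by omega⟩ - c i ⟨j, by omega⟩ = 0 ∨
      c i ⟨j + 1, by omega⟩ - c i ⟨j, by omega⟩ = 1)
    (hmono : ∀ (i : ℕ) (hi : i < n) (j : Fin (n + 1)),
      c ⟨i, by omega⟩ j ≤ c ⟨i + 1, by omega⟩ j)
    {i j : ℕ} (hi : i + 2 ≤ n) (hj : j + 2 ≤ n) (hb : i + 2 = n ∨ j + 2 = n) :
    2 * c ⟨i + 1, by omega⟩ ⟨j + 1, by omega⟩ ≤
      c ⟨i + 2, by omega⟩ ⟨j + 2, by omega⟩ + c ⟨i + 1, by omega⟩ ⟨j, by omega⟩ := by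
  have hstep_j := hstep ⟨i + 1, by omega⟩ j (by omega)
  rcases hb with rfl | rfl
  · have h₂ : c ⟨i + 2, by omega⟩ ⟨j + 2, by omega⟩ = ((j + 2 : ℕ) : ℤ) := (hlast _).1
    have h₁ : c ⟨i + 2, by omega⟩ ⟨j + 1, by omega⟩ = ((j + 1 : ℕ) : ℤ) := (hlast _).1
    have : c ⟨i + 1, by omega⟩ ⟨j + 1, by omega⟩ ≤ c ⟨i + 2, by omega⟩ ⟨j + 1, by omega⟩ :=
      hmono (i + 1) (by omega) _
    push_cast at h₁ h₂
    omega
  · have h₂ : c ⟨i + 2, by omega⟩ ⟨j + 2, by omega⟩ = ((i + 2 : ℕ) : ℤ) := (hlast _).2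
    have h₁ : c ⟨i + 1, by omega⟩ ⟨j + 2, by omega⟩ = ((i + 1 : ℕ) : ℤ) := (hlast _).2
    have : c ⟨i + 1, by omega⟩ ⟨j + 2, by omega⟩ - c ⟨i + 1, by omega⟩ ⟨j + 1, by omega⟩ = 0 ∨
        c ⟨i + 1, by omega⟩ ⟨j + 2, by omega⟩ - c ⟨i + 1, by omega⟩ ⟨j + 1, by omega⟩ = 1 :=
      hstep _ (j + 1) (by omega)
    push_cast at h₁ h₂
    omega

theorem isMagogCSM_cornerOf_iff {n : ℕ} (a : Matrix (Fin n) (Fin n) ℤ) :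
    IsMagogCSM n (cornerOf a) ↔ IsMagog n a := by
  constructor
  · rintro ⟨-, hlast, hstep, hmono, hineq⟩
    have hcolPS := (colPS_mem_iff a).2 hstep
    refine ⟨⟨entry_mem_of_colPS_mem a hcolPS, (sum_row_eq_one_iff a).2 fun k => (hlast k).2,
      (sum_col_eq_one_iff a).2 fun k => (hlast k).1, hcolPS, (rowPS_nonneg_iff a).2 hmono⟩,
      fun i j hi hj => ?_⟩
    rw [magog_expr_eq_cornerOf a (by omega) (by omega)]
    linarith [hineq i j (by omega) (by omega)]
  · rintro ⟨⟨-, hrow, hcol, hcolPS, hrowPS⟩, hineq⟩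
    have hlast k := And.intro ((sum_col_eq_one_iff a).1 hcol k) ((sum_row_eq_one_iff a).1 hrow k)
    have hstep := (colPS_mem_iff a).1 hcolPS
    have hmono := (rowPS_nonneg_iff a).1 hrowPS
    refine ⟨fun k => ⟨cornerOf_zero_left a k, cornerOf_zero_right a k⟩, hlast, hstep, hmono,
      fun i j hi hj => ?_⟩
    by_cases hb : i + 2 = n ∨ j + 2 = n
    · exact magogCSM_ineq_of_boundary hlast hstep hmono hi hj hb
    · have := hineq i j (by omega) (by omega)
      rw [magog_expr_eq_cornerOf a hi hj] at this
      linarith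

section MatOfCorner

variable {n : ℕ}

def matOfCorner (c : Fin (n + 1) → Fin (n + 1) → ℤ) : Matrix (Fin n) (Fin n) ℤ :=
  fun i j => c i.succ j.succ - c i.castSucc j.succ - c i.succ j.castSucc + c i.castSucc j.castSucc

lemma matOfCorner_cornerOf (a : Matrix (Fin n) (Fin n) ℤ) : matOfCorner (cornerOf a) = a := by
  ext i j
  have e1 : cornerOf a i.succ j.succ = cornerOf a i.castSucc j.succ + rowPS a i (j + 1) :=
    cornerOf_succ_left a i.isLt j.succ
  have e2 : cornerOf a i.succ j.castSucc = cornerOf a i.castSucc j.castSucc + rowPS a i j :=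
    cornerOf_succ_left a i.isLt j.castSucc
  have e3 : rowPS a i (j + 1) = rowPS a i j + a i j := rowPS_succ a i j.isLt
  simp only [matOfCorner]
  linarith

lemma eq_of_matOfCorner_eq {c c' : Fin (n + 1) → Fin (n + 1) → ℤ}
    (htop : ∀ k, c 0 k = c' 0 k) (hleft : ∀ k, c k 0 = c' k 0)
    (h : matOfCorner c = matOfCorner c') : c = c' := by
  funext i
  induction i using Fin.induction with
  | zero => exact funext htop
  | succ i ih =>
    funext j
    induction j using Fin.induction with
    | zero => exact hleft _
    | succ j ihj =>
      have := congrFun₂ h i j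
      simp only [matOfCorner] at this
      linarith [congrFun ih j.succ, congrFun ih j.castSucc]

lemma cornerOf_matOfCorner {c : Fin (n + 1) → Fin (n + 1) → ℤ}
    (hc : ∀ k, c 0 k = 0 ∧ c k 0 = 0) : cornerOf (matOfCorner c) = c :=
  eq_of_matOfCorner_eq (by simp [hc]) (by simp [hc]) (matOfCorner_cornerOf _)

end MatOfCorner

theorem cornerOf_bijOn (n : ℕ) :
    Set.BijOn cornerOf {a : Matrix (Fin n) (Fin n) ℤ | IsMagog n a} {c | IsMagogCSM n c} :=
  Set.bijOn_of_leftInverse_of_mem_iff matOfCorner_cornerOf (fun _ hc => cornerOf_matOfCorner hc.1)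
    isMagogCSM_cornerOf_iff

section HeightFunctions

variable {n : ℕ}

def cornerOfHeight (h : Fin (n + 1) → Fin (n + 1) → ℤ) : Fin (n + 1) → Fin (n + 1) → ℤ :=
  fun i j => (((i : ℕ) : ℤ) + ((j : ℕ) : ℤ) - h i j) / 2

lemma cornerOfHeight_hfOf (c : Fin (n + 1) → Fin (n + 1) → ℤ) : cornerOfHeight (hfOf c) = c := by
  funext i j
  simp only [cornerOfHeight, hfOf]
  omega

lemma two_dvd_add_sub_of_steps {h : Fin (n + 1) → Fin (n + 1) → ℤ}
    (hleft : ∀ k : Fin (n + 1), h k 0 = (k : ℕ))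
    (hstep : ∀ (i : Fin (n + 1)) (j : ℕ) (hj : j < n),
      h i ⟨j + 1, by omega⟩ - h i ⟨j, by omega⟩ = 1 ∨
      h i ⟨j + 1, by omega⟩ - h i ⟨j, by omega⟩ = -1)
    (i j : Fin (n + 1)) : 2 ∣ ((i : ℕ) : ℤ) + ((j : ℕ) : ℤ) - h i j := by
  obtain ⟨j, hj⟩ := j
  induction j with
  | zero => simp [hleft]
  | succ j ih =>
    have := hstep i j (by omega)
    have := ih (by omega)
    push_cast at this ⊢
    omega

lemma hfOf_cornerOfHeight {h : Fin (n + 1) → Fin (n + 1) → ℤ} (hh : IsMagogHFM n h) :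
    hfOf (cornerOfHeight h) = h := by
  funext i j
  have := two_dvd_add_sub_of_steps (fun k => (hh.1 k).2) hh.2.2.1 i j
  simp only [hfOf, cornerOfHeight]
  omega

theorem isMagogHFM_hfOf_iff (c : Fin (n + 1) → Fin (n + 1) → ℤ) :
    IsMagogHFM n (hfOf c) ↔ IsMagogCSM n c := by
  simp only [IsMagogHFM, IsMagogCSM, hfOf, Fin.val_zero, Fin.val_last]
  refine and_congr (forall_congr' fun k => and_congr (by omega) (by omega)) <|
    and_congr (forall_congr' fun k => and_congr (by omega) (by omega)) <|
    and_congr (forall₃_congr fun i j hj => by omega) <|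
    and_congr (forall₃_congr fun i hi j => ?_) (forall₄_congr fun i j hi hj => by omega)
  constructor
  · rintro ⟨k, hk⟩
    omega
  · intro hle
    exact ⟨(c ⟨i + 1, by omega⟩ j - c ⟨i, by omega⟩ j).toNat, by omega⟩

end HeightFunctions

theorem hfOf_bijOn (n : ℕ) :
    Set.BijOn hfOf {c : Fin (n + 1) → Fin (n + 1) → ℤ | IsMagogCSM n c} {h | IsMagogHFM n h} :=
  Set.bijOn_of_leftInverse_of_mem_iff cornerOfHeight_hfOf (fun _ hh => hfOf_cornerOfHeight hh)
    isMagogHFM_hfOf_iff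

/-- The composite map `a ↦ (h_{i,j}) = (i + j - 2 ∑_{i' ≤ i, j' ≤ j} a_{i',j'})`
is a bijection from `n × n` magog matrices to magog height-function matrices of
order `n`. -/
theorem magog_to_heightFunction_bijective (n : ℕ) :
    Set.BijOn (fun a : Matrix (Fin n) (Fin n) ℤ => hfOf (cornerOf a))
      {a | IsMagog n a} {h | IsMagogHFM n h} :=
  (hfOf_bijOn n).comp (cornerOf_bijOn n)
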